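/- arXiv:1007.4356 — 2 statements merged into one kernel-verified Lean document; each statement's English description precedes it below -/
import Mathlib

section
/- Let P(x) = Σ_{α,β} g_{αβ} x_α x_β + Σ_{α,β,γ} h_{αβγ} x_α x_β x_γ + (higher order terms) be a nil-polynomial on ℂⁿ, with g_{αβ}, h_{αβγ} symmetric in all indices. Then the graph {x₀ = P(x)} is in Blaschke normal form, i.e. Σ_{α,β} g^{αβ} h_{αβγ} = 0 for all γ, where (g^{αβ}) = (g_{αβ})^{-1}. -/
open Finset

/-- Annihilator `Ann(N) = {u ∈ N : uN = 0}` of a non-unital commutative ℂ-algebra. -/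
def annN (N : Type*) [NonUnitalCommRing N] [Module ℂ N] [IsScalarTower ℂ N N] :
    Submodule ℂ N where
  carrier := {u | ∀ v : N, u * v = 0}
  add_mem' := fun ha hb v => by rw [add_mul, ha v, hb v, add_zero]
  zero_mem' := fun v => zero_mul v
  smul_mem' := fun c a ha v => by rw [smul_mul_assoc, ha v, smul_zero]

/-- The descending chain of ideals: `npow N j` is `N^j` for `j ≥ 1`
(`N^1 = N`, `N^{j+1} = span(N·N^j)`; `npow N 0 := ⊤` by convention). -/
def npow (N : Type*) [NonUnitalCommRing N] [Module ℂ N] : ℕ → Submodule ℂ N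
  | 0 => ⊤
  | 1 => ⊤
  | (j+2) => Submodule.span ℂ {x : N | ∃ u : N, ∃ v ∈ npow N (j+1), x = u * v}

/-- Powers `u^m` of an element in a non-unital commutative ring
(`upow u 0 := 0` by convention; only `m ≥ 1` is used). -/
def upow {N : Type*} [NonUnitalCommRing N] (u : N) : ℕ → N
  | 0 => 0
  | 1 => u
  | (m+2) => u * upow u (m+1)

/-!
Write `u α = φ (e α)` and fix `a ∈ Ann(N)` with `ω a = 1`, so that `N = φ(ℂⁿ) ⊕ ℂ a` and there is
a left inverse `p` of `φ` killing `a`. Multiplication by `u γ` is nilpotent, hence traceless; since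
it kills `a`, its compression `A = p ∘ (u γ * ·) ∘ φ` to `ℂⁿ` has the same trace. As `u α * a = 0`,
`ω (u α u β u γ) = ω (u α · φ (A e β))`, i.e. `(h α β γ)_{α β} = ⅓ g A`, and contracting with
`g⁻¹` leaves `⅓ tr A = 0`.
-/

open scoped Matrix

section Nilpotent

variable {N : Type*} [NonUnitalCommRing N] [Module ℂ N] [SMulCommClass ℂ N N]

omit [SMulCommClass ℂ N N] in
lemma mul_mem_npow_succ (u : N) {j : ℕ} {v : N} (hv : v ∈ npow N (j + 1)) :
    u * v ∈ npow N (j + 2) :=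
  Submodule.subset_span ⟨u, v, hv, rfl⟩

lemma pow_mulLeft_apply_mem_npow (u v : N) (k : ℕ) :
    (LinearMap.mulLeft ℂ u ^ k) v ∈ npow N (k + 1) := by
  induction k with
  | zero => trivial
  | succ k ih =>
    rw [pow_succ', Module.End.mul_apply]
    exact mul_mem_npow_succ u ih

lemma isNilpotent_mulLeft {ν : ℕ} (hnil : npow N (ν + 1) = ⊥) (u : N) :
    IsNilpotent (LinearMap.mulLeft ℂ u) :=
  ⟨ν, LinearMap.ext fun v => by simpa [hnil] using pow_mulLeft_apply_mem_npow u v ν⟩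

lemma trace_mulLeft_eq_zero [FiniteDimensional ℂ N] {ν : ℕ} (hnil : npow N (ν + 1) = ⊥) (u : N) :
    LinearMap.trace ℂ N (LinearMap.mulLeft ℂ u) = 0 :=
  (LinearMap.isNilpotent_trace_of_isNilpotent (isNilpotent_mulLeft hnil u)).eq_zero

end Nilpotent

lemma exists_mem_annN_map_eq_one {N : Type*} [NonUnitalCommRing N] [Module ℂ N]
    [IsScalarTower ℂ N N] {ω : N →ₗ[ℂ] ℂ} (hω : ∃ a ∈ annN N, ω a ≠ 0) :
    ∃ a ∈ annN N, ω a = 1 := by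
  obtain ⟨a, ha, hωa⟩ := hω
  exact ⟨(ω a)⁻¹ • a, (annN N).smul_mem _ ha, by rw [map_smul, smul_eq_mul, inv_mul_cancel₀ hωa]⟩

section Compression

variable {K V N : Type*} [Field K] [AddCommGroup V] [Module K V] [AddCommGroup N] [Module K N]
  {φ : V →ₗ[K] N} {ω : N →ₗ[K] K} {a : N}

lemma exists_leftInverse_apply_eq_sub (hinj : Function.Injective φ)
    (hrange : LinearMap.range φ = LinearMap.ker ω) (ha : ω a = 1) :
    ∃ p : N →ₗ[K] V, p ∘ₗ φ = LinearMap.id ∧ ∀ v, φ (p v) = v - ω v • a := by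
  obtain ⟨q, hqφ⟩ := φ.exists_leftInverse_of_injective (LinearMap.ker_eq_bot.mpr hinj)
  refine ⟨q ∘ₗ (LinearMap.id - ω.smulRight a), ?_, fun v => ?_⟩
  · ext x
    have : ω (φ x) = 0 := by
      rw [← LinearMap.mem_ker, ← hrange]; exact LinearMap.mem_range_self φ x
    simp [this, ← LinearMap.comp_apply q φ, hqφ]
  · obtain ⟨x, hx⟩ : v - ω v • a ∈ LinearMap.range φ := by
      rw [hrange, LinearMap.mem_ker, map_sub, map_smul, ha, smul_eq_mul, mul_one, sub_self]
    simp only [LinearMap.comp_apply, LinearMap.sub_apply, LinearMap.id_apply,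
      LinearMap.smulRight_apply]
    rw [← hx, ← LinearMap.comp_apply q φ, hqφ, LinearMap.id_apply]

lemma trace_leftInverse_comp_comp [FiniteDimensional K V] [FiniteDimensional K N]
    {p : N →ₗ[K] V} (hpφ : p ∘ₗ φ = LinearMap.id) (hφp : ∀ v, φ (p v) = v - ω v • a)
    {L : N →ₗ[K] N} (hLa : L a = 0) :
    LinearMap.trace K V (p ∘ₗ L ∘ₗ φ) = LinearMap.trace K N L := by
  set X := p ∘ₗ L ∘ₗ φ
  have hL : L = φ ∘ₗ (X ∘ₗ p) + (ω ∘ₗ L).smulRight a := by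
    ext v
    simp [X, hφp, hLa]
  rw [hL, map_add, LinearMap.trace_comp_comm' (X ∘ₗ p) φ, LinearMap.comp_assoc, hpφ,
    LinearMap.comp_id, LinearMap.trace_smulRight, LinearMap.comp_apply, hLa, map_zero, add_zero]

end Compression

lemma Matrix.sum_sum_mul_eq_trace_transpose_mul {ι R : Type*} [Fintype ι] [CommSemiring R]
    (A B : Matrix ι ι R) : ∑ i, ∑ j, A i j * B i j = (Aᵀ * B).trace := by
  simp only [Matrix.trace, Matrix.diag, Matrix.mul_apply, Matrix.transpose_apply]
  exact Finset.sum_comm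

lemma Matrix.sum_sum_inv_mul_smul_mul {ι R : Type*} [Fintype ι] [DecidableEq ι] [CommRing R]
    {g : Matrix ι ι R} (hsymm : gᵀ = g) (hdet : IsUnit g.det) (c : R) (M : Matrix ι ι R) :
    ∑ i, ∑ j, g⁻¹ i j * (c • (g * M)) i j = c * M.trace := by
  rw [Matrix.sum_sum_mul_eq_trace_transpose_mul, Matrix.transpose_nonsing_inv, hsymm,
    Matrix.mul_smul, ← Matrix.mul_assoc, Matrix.nonsing_inv_mul g hdet, Matrix.one_mul,
    Matrix.trace_smul, smul_eq_mul]

lemma map_mul_apply_leftInverse {V N : Type*} [AddCommGroup V] [Module ℂ V]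
    [NonUnitalCommRing N] [Module ℂ N] [SMulCommClass ℂ N N] [IsScalarTower ℂ N N]
    {φ : V →ₗ[ℂ] N} {ω : N →ₗ[ℂ] ℂ} {p : N →ₗ[ℂ] V} {a : N}
    (ha : a ∈ annN N) (hφp : ∀ v, φ (p v) = v - ω v • a) (x w : N) :
    ω (x * φ (p w)) = ω (x * w) := by
  rw [hφp, mul_sub, mul_smul_comm, mul_comm x a, ha x, smul_zero, sub_zero]

section Cubic

variable {ι N : Type*} [Fintype ι] [DecidableEq ι] [NonUnitalCommRing N] [Module ℂ N]
  [SMulCommClass ℂ N N]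
  {φ : (ι → ℂ) →ₗ[ℂ] N} {ω : N →ₗ[ℂ] ℂ} {p : N →ₗ[ℂ] (ι → ℂ)} {a : N}

lemma map_mul_apply_eq_sum (x : N) (y : ι → ℂ) :
    ω (x * φ y) = ∑ δ, ω (x * φ (Pi.single δ 1)) * y δ := by
  conv_lhs => rw [← (Pi.basisFun ℂ ι).sum_repr y]
  simp [Finset.mul_sum, mul_smul_comm, mul_comm]

variable [IsScalarTower ℂ N N]

lemma cubic_eq_gram_mul_toMatrix' (ha : a ∈ annN N) (hφp : ∀ v, φ (p v) = v - ω v • a)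
    (γ : ι) :
    Matrix.of (fun α β => ω (φ (Pi.single α 1) * φ (Pi.single β 1) * φ (Pi.single γ 1)))
      = Matrix.of (fun α β => ω (φ (Pi.single α 1) * φ (Pi.single β 1)))
        * LinearMap.toMatrix' (p ∘ₗ LinearMap.mulLeft ℂ (φ (Pi.single γ 1)) ∘ₗ φ) := by
  ext α β
  rw [Matrix.mul_apply, Matrix.of_apply, mul_assoc, mul_comm (φ _) (φ (Pi.single γ 1)),
    ← map_mul_apply_leftInverse ha hφp, map_mul_apply_eq_sum]
  simp [LinearMap.toMatrix'_apply]

end Cubic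

theorem stmt14_general (N : Type*) [NonUnitalCommRing N] [Module ℂ N] [SMulCommClass ℂ N N]
    [IsScalarTower ℂ N N] [FiniteDimensional ℂ N]
    (ν : ℕ) (hnil : npow N (ν + 1) = ⊥)
    (n : ℕ)
    (ω : N →ₗ[ℂ] ℂ) (hω : ∃ a ∈ annN N, ω a ≠ 0)
    (φ : (Fin n → ℂ) →ₗ[ℂ] N) (hinj : Function.Injective φ)
    (hrange : LinearMap.range φ = LinearMap.ker ω)
    (g : Matrix (Fin n) (Fin n) ℂ)
    (hg : ∀ α β : Fin n, g α β
        = (1 / 2 : ℂ) * ω (φ (Pi.single α 1) * φ (Pi.single β 1)))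
    (h : Fin n → Fin n → Fin n → ℂ)
    (hh : ∀ α β γ : Fin n, h α β γ
        = (1 / 6 : ℂ) * ω (φ (Pi.single α 1) * φ (Pi.single β 1) * φ (Pi.single γ 1)))
    (hdet : IsUnit g.det) :
    ∀ γ : Fin n, ∑ α : Fin n, ∑ β : Fin n, g⁻¹ α β * h α β γ = 0 := by
  intro γ
  obtain ⟨a, ha, hωa⟩ := exists_mem_annN_map_eq_one hω
  obtain ⟨p, hpφ, hφp⟩ := exists_leftInverse_apply_eq_sub hinj hrange hωa
  set M := LinearMap.toMatrix' (p ∘ₗ LinearMap.mulLeft ℂ (φ (Pi.single γ 1)) ∘ₗ φ) with hM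
  have htrace : M.trace = 0 := by
    rw [← Matrix.trace_toLin'_eq, Matrix.toLin'_toMatrix',
      trace_leftInverse_comp_comp hpφ hφp (by simpa [mul_comm] using ha _),
      trace_mulLeft_eq_zero hnil]
  have hgram :
      Matrix.of (fun α β => ω (φ (Pi.single α 1) * φ (Pi.single β 1))) = (2 : ℂ) • g := by
    ext α β
    simp [hg]
  have hcubic : Matrix.of (fun α β => h α β γ) = (1 / 3 : ℂ) • (g * M) := by
    have : Matrix.of (fun α β => h α β γ) = (1 / 6 : ℂ) • Matrix.of
        (fun α β => ω (φ (Pi.single α 1) * φ (Pi.single β 1) * φ (Pi.single γ 1))) := by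
      ext α β
      simp [hh]
    rw [this, cubic_eq_gram_mul_toMatrix' ha hφp, ← hM, hgram, Matrix.smul_mul, smul_smul]
    norm_num
  have hsymm : gᵀ = g := by
    ext α β
    rw [Matrix.transpose_apply, hg, hg, mul_comm (φ (Pi.single β 1))]
  calc ∑ α, ∑ β, g⁻¹ α β * h α β γ = ∑ α, ∑ β, g⁻¹ α β * ((1 / 3 : ℂ) • (g * M)) α β := by
        simp only [← hcubic, Matrix.of_apply]
    _ = 0 := by rw [Matrix.sum_sum_inv_mul_smul_mul hsymm hdet, htrace, mul_zero]

/-- For a nil-polynomial `P` on `ℂⁿ` with quadratic part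
`Σ g_{αβ} x_α x_β` and cubic part `Σ h_{αβγ} x_α x_β x_γ` (coefficients symmetric in
all indices, so `g_{αβ} = ½ ω(φ(e_α)φ(e_β))` and `h_{αβγ} = ⅙ ω(φ(e_α)φ(e_β)φ(e_γ))`
in the standard basis), the graph `{x₀ = P(x)}` is in Blaschke normal form:
`Σ_{α,β} g^{αβ} h_{αβγ} = 0` for all `γ`, where `(g^{αβ}) = (g_{αβ})⁻¹`. -/
theorem stmt14 (N : Type*) [NonUnitalCommRing N] [Module ℂ N] [SMulCommClass ℂ N N]
    [IsScalarTower ℂ N N] [FiniteDimensional ℂ N]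
    (ν : ℕ) (hnil : npow N (ν + 1) = ⊥) (hann : Module.finrank ℂ (annN N) = 1)
    (n : ℕ)
    (ω : N →ₗ[ℂ] ℂ) (hω : ∃ a ∈ annN N, ω a ≠ 0)
    (φ : (Fin n → ℂ) →ₗ[ℂ] N) (hinj : Function.Injective φ)
    (hrange : LinearMap.range φ = LinearMap.ker ω)
    (g : Matrix (Fin n) (Fin n) ℂ)
    (hg : ∀ α β : Fin n, g α β
        = (1 / 2 : ℂ) * ω (φ (Pi.single α 1) * φ (Pi.single β 1)))
    (h : Fin n → Fin n → Fin n → ℂ)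
    (hh : ∀ α β γ : Fin n, h α β γ
        = (1 / 6 : ℂ) * ω (φ (Pi.single α 1) * φ (Pi.single β 1) * φ (Pi.single γ 1)))
    (hdet : IsUnit g.det) :
    ∀ γ : Fin n, ∑ α : Fin n, ∑ β : Fin n, g⁻¹ α β * h α β γ = 0 :=
  stmt14_general N ν hnil n ω hω φ hinj hrange g hg h hh hdet
end

section
/- There are exactly two linear equivalence classes of nil-polynomials on ℂ², represented by P(x₁,x₂) = x₁x₂ + x₁³ and P̃(x₁,x₂) = x₁x₂; equivalently, there are exactly two 3-dimensional admissible algebras up to isomorphism: the one generated by an element t with t⁴ = 0, and the one with basis a, b, c where a² = b² = c, ab = 0 = ac = bc = c². -/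
/-!
A three-dimensional admissible algebra `N` has `N ⊋ N² ⊋ ⋯ ⊋ 0` and `N² ≠ 0` (otherwise
`Ann N = N`), so `dim N² ∈ {1, 2}`. If `dim N² = 2` every step of the filtration is
one-dimensional and any `t ∉ N²` generates: `N = ⟨t, t², t³⟩` with `t⁴ = 0`. If `dim N² = 1`
then `N² = Ann N = ℂc` and the product is a symmetric form with values in `ℂc`, nondegenerate
modulo `c`; diagonalising it over `ℂ` gives `a, b` with `a² = b² = c`, `ab = 0`.

In these bases the nil-polynomial is `ω(u²)/2 + ω(u³)/6`, which an explicit substitution turns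
into `x₁x₂ + x₁³`, resp. `x₁x₂`. The two are inequivalent because `x₁x₂ + x₁³` is cubic along
the `x₁`-axis, whereas a quadratic form composed with a linear map is quadratic on every line.
-/

open Finset

open Submodule

section Filtration

variable {N : Type*} [NonUnitalCommRing N]

theorem upow_add_two (u : N) (m : ℕ) : upow u (m + 2) = u * upow u (m + 1) := rfl

theorem upow_eq_zero_of_le {u : N} {m n : ℕ} (hm : upow u (m + 1) = 0) (hmn : m ≤ n) :
    upow u (n + 1) = 0 := by
  induction n, hmn using Nat.le_induction with
  | base => exact hm
  | succ n _ ih => rw [upow_add_two, ih, mul_zero]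

theorem sum_Icc_upow_eq_of_le [Module ℂ N] (c : ℕ → ℂ) (ω : N →ₗ[ℂ] ℂ) {u : N} {m n : ℕ}
    (hm : upow u (m + 1) = 0) (hmn : m ≤ n) :
    ∑ ℓ ∈ Icc 2 n, c ℓ * ω (upow u ℓ) = ∑ ℓ ∈ Icc 2 m, c ℓ * ω (upow u ℓ) := by
  refine (sum_subset (Icc_subset_Icc_right hmn) fun ℓ hℓn hℓm => ?_).symm
  simp only [mem_Icc, not_and, not_le] at hℓn hℓm
  obtain ⟨l, rfl⟩ : ∃ l, ℓ = l + 1 := ⟨ℓ - 1, by omega⟩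
  rw [upow_eq_zero_of_le hm (by omega), map_zero, mul_zero]

variable [Module ℂ N]

theorem npow_add_two (j : ℕ) :
    npow N (j + 2) = span ℂ {x : N | ∃ u : N, ∃ v ∈ npow N (j + 1), x = u * v} := rfl

theorem mul_mem_npow_add_two (u : N) {v : N} {j : ℕ} (hv : v ∈ npow N (j + 1)) :
    u * v ∈ npow N (j + 2) :=
  subset_span ⟨u, v, hv, rfl⟩

theorem npow_succ_le (j : ℕ) : npow N (j + 1) ≤ npow N j := by
  induction j with
  | zero => exact le_top
  | succ j ih =>
    rcases j with _ | j
    · exact le_top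
    · exact span_mono fun x ⟨u, v, hv, hx⟩ => ⟨u, v, ih hv, hx⟩

theorem npow_antitone : Antitone (npow N) :=
  antitone_nat_of_succ_le npow_succ_le

theorem upow_mem_npow (u : N) (ℓ : ℕ) : upow u ℓ ∈ npow N ℓ := by
  induction ℓ with
  | zero => exact mem_top
  | succ ℓ ih =>
    rcases ℓ with _ | ℓ
    · exact mem_top
    · exact mul_mem_npow_add_two u ih

theorem sum_Icc_upow_eq {ν k : ℕ} (hν : npow N (ν + 1) = ⊥) (c : ℕ → ℂ) (ω : N →ₗ[ℂ] ℂ)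
    {u : N} (hk : upow u (k + 1) = 0) :
    ∑ ℓ ∈ Icc 2 ν, c ℓ * ω (upow u ℓ) = ∑ ℓ ∈ Icc 2 k, c ℓ * ω (upow u ℓ) := by
  have hu : upow u (ν + 1) = 0 := by simpa [hν] using upow_mem_npow u (ν + 1)
  rw [← sum_Icc_upow_eq_of_le c ω hu (Nat.le_add_right ν k),
    ← sum_Icc_upow_eq_of_le c ω hk (Nat.le_add_left k ν), add_comm]

theorem npow_add_eq_of_npow_succ_eq {k : ℕ} (h : npow N (k + 2) = npow N (k + 1)) (m : ℕ) :
    npow N (k + 1 + m) = npow N (k + 1) := by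
  induction m with
  | zero => rfl
  | succ m ih =>
    rcases m with _ | m
    · exact h
    · rw [show k + 1 + (m + 2) = (k + m + 1) + 2 by omega, npow_add_two,
        show k + m + 1 + 1 = k + 1 + (m + 1) by omega, ih, ← npow_add_two, h]

theorem npow_succ_lt {ν k : ℕ} (hν : npow N (ν + 1) = ⊥) (hk : npow N (k + 1) ≠ ⊥) :
    npow N (k + 2) < npow N (k + 1) := by
  refine lt_of_le_of_ne (npow_succ_le _) fun h => hk ?_
  rcases le_total k ν with hle | hle
  · obtain ⟨m, rfl⟩ := Nat.exists_eq_add_of_le hle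
    rw [← npow_add_eq_of_npow_succ_eq h m, ← hν]
    ring_nf
  · exact le_bot_iff.1 (hν ▸ npow_antitone (by omega))

variable [IsScalarTower ℂ N N]

theorem mul_mem_npow {u v : N} {i j : ℕ} (hu : u ∈ npow N (i + 1)) (hv : v ∈ npow N (j + 1)) :
    u * v ∈ npow N (i + j + 2) := by
  induction i generalizing u with
  | zero => simpa using mul_mem_npow_add_two u hv
  | succ i ih =>
    induction hu using span_induction with
    | mem x hx =>
      obtain ⟨p, q, hq, rfl⟩ := hx
      rw [mul_assoc, show i + 1 + j + 2 = i + j + 1 + 2 by omega]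
      exact mul_mem_npow_add_two p (ih hq)
    | zero => simp
    | add x y _ _ hx hy => rw [add_mul]; exact add_mem hx hy
    | smul c x _ hx => rw [smul_mul_assoc]; exact smul_mem _ c hx

theorem npow_le_annN {k : ℕ} (hk : npow N (k + 2) = ⊥) : npow N (k + 1) ≤ annN N := by
  intro w hw v
  rw [mul_comm, ← mem_bot ℂ, ← hk]
  exact mul_mem_npow_add_two v hw

end Filtration

open Module

section LinearAlgebra

variable {K V : Type*} [Field K] [AddCommGroup V] [Module K V]

theorem sup_span_singleton_eq_top_of_notMem [FiniteDimensional K V] {p : Submodule K V} {v : V}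
    (hv : v ∉ p) (hp : finrank K p + 1 = finrank K V) : p ⊔ span K {v} = ⊤ :=
  eq_top_of_finrank_eq (by rw [finrank_sup_span_singleton hv, hp])

theorem apply_ne_zero_of_finrank_eq_one {S : Submodule K V} (hS : finrank K S = 1) {e : V}
    (he : e ∈ S) (he0 : e ≠ 0) {ω : V →ₗ[K] K} (hω : ∃ a ∈ S, ω a ≠ 0) : ω e ≠ 0 := by
  obtain ⟨a, ha, hωa⟩ := hω
  rw [eq_span_singleton_of_mem_of_finrank_eq_one hS he he0] at ha
  obtain ⟨c, rfl⟩ := mem_span_singleton.1 ha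
  intro h
  simp [h] at hωa

theorem exists_coord_of_span_eq_top (hdim : finrank K V = 3) {v₀ v₁ v₂ : V}
    (h : span K {v₀, v₁, v₂} = ⊤) :
    v₂ ≠ 0 ∧ ∃ X Y Z : V →ₗ[K] K, ∀ u, u = X u • v₀ + Y u • v₁ + Z u • v₂ := by
  have hle : ⊤ ≤ span K (Set.range ![v₀, v₁, v₂]) := by
    rw [Matrix.range_cons, Matrix.range_cons_cons_empty, ← h]
    rfl
  have hcard : Fintype.card (Fin 3) = finrank K V := by simp [hdim]
  set B := basisOfTopLeSpanOfCardEqFinrank _ hle hcard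
  have hB : ⇑B = ![v₀, v₁, v₂] := coe_basisOfTopLeSpanOfCardEqFinrank _ hle hcard
  refine ⟨by simpa [hB] using B.ne_zero 2, B.coord 0, B.coord 1, B.coord 2, fun u => ?_⟩
  conv_lhs => rw [← B.sum_repr u]
  simp [Fin.sum_univ_three, hB]

theorem exists_linearEquiv_eq_comp {W : Type*} [AddCommGroup W] [Module K W]
    [FiniteDimensional K W] {ω : V →ₗ[K] K} {φ : W →ₗ[K] V} (hφ : Function.Injective φ)
    (hrange : LinearMap.range φ = LinearMap.ker ω) {e : V} (he : ω e ≠ 0) (f : V →ₗ[K] W)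
    (hf : ∀ u, f u = 0 → u ∈ span K {e}) : ∃ g : W ≃ₗ[K] W, ∀ x, g x = f (φ x) := by
  have hinj : Function.Injective (f ∘ₗ φ) := by
    refine (injective_iff_map_eq_zero _).2 fun x hx => hφ ?_
    obtain ⟨c, hc⟩ := mem_span_singleton.1 (hf _ hx)
    have hker : ω (φ x) = 0 := LinearMap.mem_ker.1 (hrange ▸ LinearMap.mem_range_self φ x)
    rw [← hc, map_smul, smul_eq_mul, mul_eq_zero] at hker
    rw [← hc, hker.resolve_right he, zero_smul, map_zero]
  exact ⟨LinearEquiv.ofInjectiveEndo _ hinj, fun x => rfl⟩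

end LinearAlgebra

section Classification

variable {N : Type*} [NonUnitalCommRing N] [Module ℂ N]

/-- Polarisation: `2uv = (u + v)² - u² - v²`. -/
theorem exists_mul_self_ne_zero (h2 : npow N 2 ≠ ⊥) : ∃ a : N, a * a ≠ 0 := by
  by_contra! h
  refine h2 (eq_bot_iff.2 (span_le.2 ?_))
  rintro _ ⟨u, v, -, rfl⟩
  have huv : (2 : ℂ) • (u * v) = 0 := by
    have := h (u + v)
    rwa [add_mul, mul_add, mul_add, h u, h v, mul_comm v u, zero_add, add_zero, ← two_smul ℂ]
      at this
  exact (smul_eq_zero.1 huv).resolve_left two_ne_zero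

variable [SMulCommClass ℂ N N]

/-- Gram–Schmidt: correct an arbitrary `v ∉ p` by a multiple of `a`. -/
theorem exists_notMem_mul_eq_zero {a : N} (hmul : ∀ v, a * v ∈ span ℂ {a * a})
    {p : Submodule ℂ N} (ha : a ∈ p) (hp : p ≠ ⊤) : ∃ b ∉ p, a * b = 0 := by
  obtain ⟨v, -, hv⟩ := SetLike.exists_of_lt (lt_top_iff_ne_top.2 hp)
  obtain ⟨s, hs⟩ := mem_span_singleton.1 (hmul v)
  refine ⟨v - s • a, fun h => hv ?_, by rw [mul_sub, mul_smul_comm, hs, sub_self]⟩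
  simpa using add_mem h (smul_mem p s ha)

variable [IsScalarTower ℂ N N]

theorem mem_annN_of_span_eq_top {s : Set N} (hs : span ℂ s = ⊤) {u : N}
    (h : ∀ v ∈ s, u * v = 0) : u ∈ annN N := by
  intro v
  have hv : v ∈ span ℂ s := hs ▸ mem_top
  induction hv using span_induction with
  | mem v hv => exact h v hv
  | zero => exact mul_zero u
  | add v w _ _ hv hw => rw [mul_add, hv, hw, add_zero]
  | smul c v _ hv => rw [mul_smul_comm, hv, smul_zero]

theorem npow_le_span_upow_sup {t : N} (ht : span ℂ {t} ⊔ npow N 2 = ⊤) (k : ℕ) :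
    npow N (k + 1) ≤ span ℂ {upow t (k + 1)} ⊔ npow N (k + 2) := by
  induction k with
  | zero => exact ht.ge
  | succ k ih =>
    rw [npow_add_two, span_le]
    rintro _ ⟨u, v, hv, rfl⟩
    obtain ⟨_, hy, s, hs, rfl⟩ := mem_sup.1 (ht.ge (mem_top : u ∈ ⊤))
    obtain ⟨α, rfl⟩ := mem_span_singleton.1 hy
    obtain ⟨_, hz, s', hs', rfl⟩ := mem_sup.1 (ih hv)
    obtain ⟨β, rfl⟩ := mem_span_singleton.1 hz
    have hexp : (α • t + s) * (β • upow t (k + 1) + s') = (α * β) • upow t (k + 2)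
        + (α • (t * s') + β • (s * upow t (k + 1)) + s * s') := by
      rw [upow_add_two]
      simp only [add_mul, mul_add, smul_mul_assoc, mul_smul_comm]
      module
    rw [hexp]
    refine add_mem (mem_sup_left (smul_mem _ _ (mem_span_singleton_self _)))
      (mem_sup_right (add_mem (add_mem (smul_mem _ _ ?_) (smul_mem _ _ ?_)) ?_))
    · exact mul_mem_npow_add_two t hs'
    · simpa [add_comm] using mul_mem_npow (i := 1) hs (upow_mem_npow t (k + 1))
    · have hss' : s * s' ∈ npow N (k + 3 + 1) := by
        simpa [add_comm, add_left_comm] using mul_mem_npow (i := 1) hs hs'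
      exact npow_succ_le _ hss'

variable [FiniteDimensional ℂ N]

theorem exists_cyclic_of_finrank_npow_two_eq_two {ν : ℕ} (hν : npow N (ν + 1) = ⊥)
    (hann : finrank ℂ (annN N) = 1) (hdim : finrank ℂ N = 3) (h2 : finrank ℂ (npow N 2) = 2) :
    ∃ t : N, upow t 4 = 0 ∧ span ℂ {t, t * t, t * (t * t)} = ⊤ := by
  have h3 : npow N 3 ≠ ⊥ := fun h3 => by
    have : finrank ℂ (npow N 2) ≤ finrank ℂ (annN N) :=
      Submodule.finrank_mono (npow_le_annN (k := 1) h3)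
    omega
  have h4 : npow N 4 = ⊥ := by
    have h3pos : finrank ℂ (npow N 3) ≠ 0 := fun h => h3 (finrank_eq_zero.1 h)
    have h2ne : npow N 2 ≠ ⊥ := fun h => by rw [h, finrank_bot] at h2; omega
    have h32 : finrank ℂ (npow N 3) < finrank ℂ (npow N 2) :=
      Submodule.finrank_lt_finrank_of_lt (npow_succ_lt hν (k := 1) h2ne)
    have h43 : finrank ℂ (npow N 4) < finrank ℂ (npow N 3) :=
      Submodule.finrank_lt_finrank_of_lt (npow_succ_lt hν (k := 2) h3)
    exact finrank_eq_zero.1 (by omega)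
  obtain ⟨t, -, ht⟩ := SetLike.exists_of_lt (lt_top_iff_ne_top.2 fun h : npow N 2 = ⊤ => by
    rw [h, finrank_top] at h2
    omega)
  have htop : span ℂ {t} ⊔ npow N 2 = ⊤ := by
    rw [sup_comm]
    exact sup_span_singleton_eq_top_of_notMem ht (by omega)
  refine ⟨t, by simpa [h4] using upow_mem_npow t 4, eq_top_iff.2 ?_⟩
  calc ⊤ = span ℂ {t} ⊔ npow N 2 := htop.symm
    _ ≤ span ℂ {t} ⊔ (span ℂ {t * t} ⊔ (span ℂ {t * (t * t)} ⊔ npow N 4)) :=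
      sup_le_sup_left ((npow_le_span_upow_sup htop 1).trans
        (sup_le_sup_left (npow_le_span_upow_sup htop 2) _)) _
    _ = span ℂ {t, t * t, t * (t * t)} := by rw [h4, sup_bot_eq, span_insert, span_insert]

theorem exists_split_of_npow_three_eq_bot (hann : finrank ℂ (annN N) = 1)
    (hdim : finrank ℂ N = 3) (h3 : npow N 3 = ⊥) (h2 : npow N 2 ≠ ⊥) :
    ∃ a b : N, a * a = b * b ∧ a * b = 0 ∧ a * (a * a) = 0 ∧ b * (a * a) = 0 ∧
      (a * a) * (a * a) = 0 ∧ span ℂ {a, b, a * a} = ⊤ := by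
  obtain ⟨a, ha⟩ := exists_mul_self_ne_zero h2
  have hN2 : npow N 2 = annN N := eq_of_le_of_finrank_le (npow_le_annN (k := 1) h3)
    (by rw [hann, Nat.one_le_iff_ne_zero]; exact fun h => h2 (finrank_eq_zero.1 h))
  have hc : a * a ∈ annN N := hN2 ▸ mul_mem_npow_add_two a (j := 0) mem_top
  have hann₁ : annN N = span ℂ {a * a} := eq_span_singleton_of_mem_of_finrank_eq_one hann hc ha
  have hmul : ∀ u v : N, u * v ∈ span ℂ {a * a} := fun u v => by
    rw [← hann₁, ← hN2]
    exact mul_mem_npow_add_two u (j := 0) mem_top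
  have hP : finrank ℂ (span ℂ {a, a * a}) + 1 = finrank ℂ N := by
    have haP : a ∉ span ℂ {a * a} := fun h => by
      obtain ⟨s, hs⟩ := mem_span_singleton.1 h
      exact ha (by nth_rewrite 1 [← hs]; rw [smul_mul_assoc, hc, smul_zero])
    rw [span_insert, sup_comm, finrank_sup_span_singleton haP, finrank_span_singleton ha, hdim]
  have hspan : ∀ b, b ∉ span ℂ {a, a * a} → span ℂ {a, b, a * a} = ⊤ := fun b hb => by
    rw [← sup_span_singleton_eq_top_of_notMem hb hP, span_insert, span_insert, span_insert,
      sup_comm (span ℂ {b}), sup_assoc]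
  obtain ⟨b₀, hb₀, hab₀⟩ := exists_notMem_mul_eq_zero (p := span ℂ {a, a * a})
    (fun v => hmul a v) (subset_span (by simp)) fun h => by rw [h, finrank_top] at hP; omega
  have hb₀b₀ : b₀ * b₀ ≠ 0 := fun h => by
    have hb₀ann : b₀ ∈ annN N := mem_annN_of_span_eq_top (hspan b₀ hb₀) (by
      simp only [Set.mem_insert_iff, Set.mem_singleton_iff, forall_eq_or_imp, forall_eq]
      exact ⟨mul_comm b₀ a ▸ hab₀, h, mul_comm (a * a) b₀ ▸ hc b₀⟩)
    rw [hann₁] at hb₀ann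
    exact hb₀ (span_mono (by simp) hb₀ann)
  obtain ⟨s, hs⟩ := mem_span_singleton.1 (hmul b₀ b₀)
  have hs0 : s ≠ 0 := by rintro rfl; exact hb₀b₀ (by rw [← hs, zero_smul])
  obtain ⟨r, hr⟩ := IsAlgClosed.exists_pow_nat_eq s⁻¹ two_pos
  have hr0 : r ≠ 0 := fun h => inv_ne_zero hs0 (by rw [← hr, h, zero_pow two_ne_zero])
  refine ⟨a, r • b₀, ?_, by rw [mul_smul_comm, hab₀, smul_zero], by rw [mul_comm, hc],
    by rw [mul_comm, hc], hc _, hspan _ fun h => hb₀ ((smul_mem_iff _ hr0).1 h)⟩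
  rw [smul_mul_smul_comm, ← hs, smul_smul, ← sq, hr, inv_mul_cancel₀ hs0, one_smul]

theorem exists_cyclic_or_exists_split {ν : ℕ} (hν : npow N (ν + 1) = ⊥)
    (hann : finrank ℂ (annN N) = 1) (hdim : finrank ℂ N = 3) :
    (∃ t : N, upow t 4 = 0 ∧ span ℂ {t, t * t, t * (t * t)} = ⊤) ∨
    (∃ a b : N, a * a = b * b ∧ a * b = 0 ∧ a * (a * a) = 0 ∧ b * (a * a) = 0 ∧
      (a * a) * (a * a) = 0 ∧ span ℂ {a, b, a * a} = ⊤) := by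
  have h2 : npow N 2 ≠ ⊥ := fun h2 => by
    have : finrank ℂ (⊤ : Submodule ℂ N) ≤ finrank ℂ (annN N) :=
      Submodule.finrank_mono (npow_le_annN (k := 0) h2)
    rw [finrank_top, hann, hdim] at this
    omega
  have h2pos : finrank ℂ (npow N 2) ≠ 0 := fun h => h2 (finrank_eq_zero.1 h)
  have h2lt : finrank ℂ (npow N 2) < finrank ℂ N :=
    Submodule.finrank_lt (npow_succ_lt hν (k := 0) (ne_bot_of_le_ne_bot h2 (npow_succ_le 1))).ne
  rcases (by omega : finrank ℂ (npow N 2) = 1 ∨ finrank ℂ (npow N 2) = 2) with h21 | h22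
  · have h32 : finrank ℂ (npow N 3) < finrank ℂ (npow N 2) :=
      Submodule.finrank_lt_finrank_of_lt (npow_succ_lt hν (k := 1) h2)
    exact .inr (exists_split_of_npow_three_eq_bot hann hdim (finrank_eq_zero.1 (by omega)) h2)
  · exact .inl (exists_cyclic_of_finrank_npow_two_eq_two hν hann hdim h22)

end Classification

section NilPolynomial

variable {N : Type*} [NonUnitalCommRing N] [Module ℂ N] [IsScalarTower ℂ N N]
  [SMulCommClass ℂ N N]

theorem upow_of_cyclic {t : N} (ht : upow t 4 = 0) {X Y Z : ℂ} {u : N}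
    (hu : u = X • t + Y • (t * t) + Z • (t * (t * t))) :
    upow u 2 = X ^ 2 • (t * t) + (2 * X * Y) • (t * (t * t)) ∧
      upow u 3 = X ^ 3 • (t * (t * t)) ∧ upow u 4 = 0 := by
  have ht' : t * (t * (t * t)) = 0 := ht
  have h2 : u * u = X ^ 2 • (t * t) + (2 * X * Y) • (t * (t * t)) := by
    subst hu
    simp only [add_mul, mul_add, smul_mul_assoc, mul_smul_comm, mul_assoc, ht', mul_zero,
      smul_zero, add_zero]
    module
  have h3 : u * (u * u) = X ^ 3 • (t * (t * t)) := by
    rw [h2, hu]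
    simp only [add_mul, mul_add, smul_mul_assoc, mul_smul_comm, mul_assoc, ht', mul_zero,
      smul_zero, add_zero]
    module
  refine ⟨h2, h3, ?_⟩
  show u * (u * (u * u)) = 0
  rw [h3, hu]
  simp only [add_mul, smul_mul_assoc, mul_smul_comm, mul_assoc, ht', mul_zero, smul_zero,
    add_zero]

theorem upow_of_split {a b : N} (hab : a * a = b * b) (hab0 : a * b = 0) (hc : a * a ∈ annN N)
    {X Y Z : ℂ} {u : N} (hu : u = X • a + Y • b + Z • (a * a)) :
    upow u 2 = (X ^ 2 + Y ^ 2) • (a * a) ∧ upow u 3 = 0 := by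
  have hc₁ : ∀ v, a * a * v = 0 := hc
  have hc₂ : ∀ v, v * (a * a) = 0 := fun v => mul_comm (a * a) v ▸ hc v
  have h2 : u * u = (X ^ 2 + Y ^ 2) • (a * a) := by
    subst hu
    simp only [add_mul, mul_add, smul_mul_assoc, mul_smul_comm, hc₁, hc₂, mul_comm b a, hab0,
      ← hab, smul_zero, add_zero]
    module
  exact ⟨h2, show u * (u * u) = 0 by rw [h2, mul_smul_comm, hc₂, smul_zero]⟩

theorem exists_nilPoly_eq_cubic {ν : ℕ} (hν : npow N (ν + 1) = ⊥)
    (hann : finrank ℂ (annN N) = 1) (hdim : finrank ℂ N = 3) {ω : N →ₗ[ℂ] ℂ}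
    (hω : ∃ a ∈ annN N, ω a ≠ 0) {φ : (Fin 2 → ℂ) →ₗ[ℂ] N} (hφ : Function.Injective φ)
    (hrange : LinearMap.range φ = LinearMap.ker ω) {t : N} (ht : upow t 4 = 0)
    (hspan : span ℂ {t, t * t, t * (t * t)} = ⊤) :
    ∃ (c : ℂ) (g : (Fin 2 → ℂ) ≃ₗ[ℂ] (Fin 2 → ℂ)), c ≠ 0 ∧ ∀ x : Fin 2 → ℂ,
      ∑ ℓ ∈ Icc 2 ν, ((ℓ.factorial : ℂ))⁻¹ * ω (upow (φ x) ℓ) =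
        c * (g x 0 * g x 1 + g x 0 ^ 3) := by
  have ht' : t * (t * (t * t)) = 0 := ht
  obtain ⟨hw0, X, Y, Z, hXYZ⟩ := exists_coord_of_span_eq_top hdim hspan
  have hw : t * (t * t) ∈ annN N := mem_annN_of_span_eq_top hspan (by
    simp only [Set.mem_insert_iff, Set.mem_singleton_iff, forall_eq_or_imp, forall_eq, mul_assoc,
      ht', mul_zero, and_self])
  have hωw := apply_ne_zero_of_finrank_eq_one hann hw hw0 hω
  obtain ⟨l, hl⟩ := IsAlgClosed.exists_pow_nat_eq (6 : ℂ)⁻¹ three_pos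
  have hl0 : l ≠ 0 := by rintro rfl; norm_num at hl
  set β := ω (t * t) / (2 * ω (t * (t * t)))
  -- `g = (l X, l⁻¹ (Y + β X))` with `l³ = 1/6` completes the square and normalises the cube.
  let f : N →ₗ[ℂ] Fin 2 → ℂ := LinearMap.pi ![l • X, l⁻¹ • (Y + β • X)]
  obtain ⟨g, hg⟩ := exists_linearEquiv_eq_comp hφ hrange hωw f fun u hu => by
    have hX : X u = 0 := by simpa [f, hl0] using congrFun hu 0
    have hY : Y u = 0 := by simpa [f, hl0, hX] using congrFun hu 1
    rw [hXYZ u, hX, hY, zero_smul, zero_smul, zero_add, zero_add]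
    exact smul_mem _ _ (mem_span_singleton_self _)
  refine ⟨ω (t * (t * t)), g, hωw, fun x => ?_⟩
  obtain ⟨h2, h3, h4⟩ := upow_of_cyclic ht (hXYZ (φ x))
  rw [sum_Icc_upow_eq hν _ ω h4, show Icc 2 3 = {2, 3} from rfl, sum_pair (by norm_num),
    h2, h3, hg]
  simp only [f, β, LinearMap.pi_apply, Matrix.cons_val_zero, Matrix.cons_val_one,
    LinearMap.smul_apply, LinearMap.add_apply, map_add, map_smul, smul_eq_mul]
  rw [mul_pow, hl]
  field_simp
  norm_num [Nat.factorial]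
  ring

theorem exists_nilPoly_eq_product {ν : ℕ} (hν : npow N (ν + 1) = ⊥)
    (hann : finrank ℂ (annN N) = 1) (hdim : finrank ℂ N = 3) {ω : N →ₗ[ℂ] ℂ}
    (hω : ∃ a ∈ annN N, ω a ≠ 0) {φ : (Fin 2 → ℂ) →ₗ[ℂ] N} (hφ : Function.Injective φ)
    (hrange : LinearMap.range φ = LinearMap.ker ω) {a b : N} (hab : a * a = b * b)
    (hab0 : a * b = 0) (ha3 : a * (a * a) = 0) (hb3 : b * (a * a) = 0)
    (hc3 : (a * a) * (a * a) = 0) (hspan : span ℂ {a, b, a * a} = ⊤) :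
    ∃ (c : ℂ) (g : (Fin 2 → ℂ) ≃ₗ[ℂ] (Fin 2 → ℂ)), c ≠ 0 ∧ ∀ x : Fin 2 → ℂ,
      ∑ ℓ ∈ Icc 2 ν, ((ℓ.factorial : ℂ))⁻¹ * ω (upow (φ x) ℓ) = c * (g x 0 * g x 1) := by
  obtain ⟨hc0, X, Y, Z, hXYZ⟩ := exists_coord_of_span_eq_top hdim hspan
  have hc : a * a ∈ annN N := mem_annN_of_span_eq_top hspan (by
    simp only [Set.mem_insert_iff, Set.mem_singleton_iff, forall_eq_or_imp, forall_eq]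
    exact ⟨mul_comm a (a * a) ▸ ha3, mul_comm b (a * a) ▸ hb3, hc3⟩)
  have hωc := apply_ne_zero_of_finrank_eq_one hann hc hc0 hω
  -- `X² + Y² = (X + iY)(X - iY)`
  let f : N →ₗ[ℂ] Fin 2 → ℂ := LinearMap.pi ![X + Complex.I • Y, X - Complex.I • Y]
  obtain ⟨g, hg⟩ := exists_linearEquiv_eq_comp hφ hrange hωc f fun u hu => by
    have h0 : X u + Complex.I * Y u = 0 := by simpa [f] using congrFun hu 0
    have h1 : X u - Complex.I * Y u = 0 := by simpa [f] using congrFun hu 1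
    have hX : X u = 0 := by linear_combination (h0 + h1) / 2
    have hY : Y u = 0 := by
      simpa using (by linear_combination (h0 - h1) / 2 : Complex.I * Y u = 0)
    rw [hXYZ u, hX, hY, zero_smul, zero_smul, zero_add, zero_add]
    exact smul_mem _ _ (mem_span_singleton_self _)
  refine ⟨ω (a * a) / 2, g, div_ne_zero hωc two_ne_zero, fun x => ?_⟩
  obtain ⟨h2, h3⟩ := upow_of_split hab hab0 hc (hXYZ (φ x))
  rw [sum_Icc_upow_eq hν _ ω h3, Icc_self, sum_singleton, h2, hg]
  simp only [f, LinearMap.pi_apply, Matrix.cons_val_zero, Matrix.cons_val_one,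
    LinearMap.add_apply, LinearMap.sub_apply, LinearMap.smul_apply, map_smul, smul_eq_mul,
    Nat.factorial]
  linear_combination (ω (a * a) / 2 * Y (φ x) ^ 2) * Complex.I_sq

theorem not_forall_cubic_eq_smul_product (c : ℂ) (g : (Fin 2 → ℂ) →ₗ[ℂ] (Fin 2 → ℂ)) :
    ¬ ∀ x : Fin 2 → ℂ, x 0 * x 1 + x 0 ^ 3 = c * (g x 0 * g x 1) := by
  intro h
  -- Along the axis `x₁`, the left side is cubic but the right side is quadratic.
  have h1 := h ![1, 0]
  have h2 := h ((2 : ℂ) • ![1, 0])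
  rw [map_smul] at h2
  simp only [Pi.smul_apply, smul_eq_mul, Matrix.cons_val_zero, Matrix.cons_val_one] at h1 h2
  have : (8 : ℂ) = 4 := by linear_combination h2 - 4 * h1
  norm_num at this

end NilPolynomial

/-- There are exactly two linear equivalence classes of nil-polynomials
on `ℂ²`, represented by `Q₁(x) = x₁x₂ + x₁³` and `Q₂(x) = x₁x₂`: every nil-polynomial
on `ℂ²` (arising from a 3-dimensional admissible algebra) is linearly equivalent to one
of them, and they are not linearly equivalent to each other. Equivalently, every
3-dimensional admissible algebra is either generated by a single element `t` with
`t⁴ = 0` (and basis `t, t², t³`), or has a basis `a, b, c` with `a² = b² = c`,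
`ab = ac = bc = c² = 0`. -/
theorem stmt16 :
    (∀ (N : Type) (_ : NonUnitalCommRing N) (_ : Module ℂ N) (_ : SMulCommClass ℂ N N)
        (_ : IsScalarTower ℂ N N) (_ : FiniteDimensional ℂ N)
        (ν : ℕ), npow N (ν + 1) = ⊥ → Module.finrank ℂ (annN N) = 1 →
        Module.finrank ℂ N = 3 →
        ∀ (ω : N →ₗ[ℂ] ℂ), (∃ a ∈ annN N, ω a ≠ 0) →
        ∀ (φ : (Fin 2 → ℂ) →ₗ[ℂ] N), Function.Injective φ →
          LinearMap.range φ = LinearMap.ker ω →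
        ∃ (c : ℂ) (g : (Fin 2 → ℂ) ≃ₗ[ℂ] (Fin 2 → ℂ)), c ≠ 0 ∧
          ((∀ x : Fin 2 → ℂ,
              ∑ ℓ ∈ Finset.Icc 2 ν, ((Nat.factorial ℓ : ℂ))⁻¹ * ω (upow (φ x) ℓ)
                = c * (g x 0 * g x 1 + (g x 0) ^ 3)) ∨
           (∀ x : Fin 2 → ℂ,
              ∑ ℓ ∈ Finset.Icc 2 ν, ((Nat.factorial ℓ : ℂ))⁻¹ * ω (upow (φ x) ℓ)
                = c * (g x 0 * g x 1)))) ∧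
    (¬ ∃ (c : ℂ) (g : (Fin 2 → ℂ) ≃ₗ[ℂ] (Fin 2 → ℂ)), c ≠ 0 ∧
        ∀ x : Fin 2 → ℂ, x 0 * x 1 + (x 0) ^ 3 = c * (g x 0 * g x 1)) ∧
    (∀ (N : Type) (_ : NonUnitalCommRing N) (_ : Module ℂ N) (_ : SMulCommClass ℂ N N)
        (_ : IsScalarTower ℂ N N) (_ : FiniteDimensional ℂ N)
        (ν : ℕ), npow N (ν + 1) = ⊥ → Module.finrank ℂ (annN N) = 1 →
        Module.finrank ℂ N = 3 →
        ((∃ t : N, upow t 4 = 0 ∧ Submodule.span ℂ {t, t * t, t * (t * t)} = ⊤) ∨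
         (∃ a b : N, a * a = b * b ∧ a * b = 0 ∧ a * (a * a) = 0 ∧ b * (a * a) = 0 ∧
            (a * a) * (a * a) = 0 ∧ Submodule.span ℂ {a, b, a * a} = ⊤))) := by
  refine ⟨fun N _ _ _ _ _ ν hν hann hdim ω hω φ hφ hrange => ?_,
    fun ⟨c, g, _, h⟩ => not_forall_cubic_eq_smul_product c g h,
    fun N _ _ _ _ _ ν hν hann hdim => exists_cyclic_or_exists_split hν hann hdim⟩
  rcases exists_cyclic_or_exists_split hν hann hdim with
    ⟨t, ht, hspan⟩ | ⟨a, b, hab, hab0, ha3, hb3, hc3, hspan⟩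
  · obtain ⟨c, g, hc, h⟩ := exists_nilPoly_eq_cubic hν hann hdim hω hφ hrange ht hspan
    exact ⟨c, g, hc, .inl h⟩
  · obtain ⟨c, g, hc, h⟩ :=
      exists_nilPoly_eq_product hν hann hdim hω hφ hrange hab hab0 ha3 hb3 hc3 hspan
    exact ⟨c, g, hc, .inr h⟩
end
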